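/- Let 0 < T ≤ π/2, 0 < φ_W < π/2, and φ_W + T ≠ π/2 (i.e., (φ_W, T) ∈ D₃). Then F²_{φ_W,T} has exactly one positive root, and this root is the unique positive solution of the equation x·cot φ_W = coth(Tx). -/
import Mathlib


open Real

/-- The determinant function
`F²_{φ_W,T}(a) = -a² sinh(2aT) sin(2φ_W) + 2a (1 - cosh(2aT) cos(2φ_W)) + sinh(2aT) sin(2φ_W)`. -/
noncomputable def F2 (φW T a : ℝ) : ℝ :=
  -a ^ 2 * Real.sinh (2 * a * T) * Real.sin (2 * φW)
    + 2 * a * (1 - Real.cosh (2 * a * T) * Real.cos (2 * φW))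
    + Real.sinh (2 * a * T) * Real.sin (2 * φW)

/-- The hyperbolic cotangent `coth x = cosh x / sinh x` (not available in Mathlib). -/
noncomputable def Real.coth (x : ℝ) : ℝ := Real.cosh x / Real.sinh x

lemma F2_factor (φW T a : ℝ) :
    F2 φW T a = 4 * (Real.sin φW * Real.cosh (a * T) - a * Real.cos φW * Real.sinh (a * T)) *
      (a * Real.sin φW * Real.cosh (a * T) + Real.cos φW * Real.sinh (a * T)) := by
  unfold F2
  rw [show (2 : ℝ) * a * T = 2 * (a * T) by ring, Real.sin_two_mul, Real.cos_two_mul,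
    Real.sinh_two_mul, Real.cosh_two_mul]
  have h1 := Real.sin_sq_add_cos_sq φW
  have h2 := Real.cosh_sq (a * T)
  linear_combination (-4 * a * Real.cosh (a * T) ^ 2) * h1 + (-2 * a) * h2

/-- `g` vanishing is equivalent to the coth equation, for positive `b`. -/
lemma g_eq_zero_iff (φW T b : ℝ) (hT0 : 0 < T) (hs : 0 < Real.sin φW) (hb : 0 < b) :
    Real.sin φW * Real.cosh (b * T) - b * Real.cos φW * Real.sinh (b * T) = 0 ↔
      b * Real.cot φW = Real.coth (T * b) := by
  have hS : 0 < Real.sinh (b * T) := Real.sinh_pos_iff.2 (mul_pos hb hT0)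
  rw [Real.cot_eq_cos_div_sin, Real.coth, show T * b = b * T by ring]
  constructor
  · intro h
    field_simp
    linarith
  · intro h
    field_simp at h
    linarith

/-- Uniqueness of positive roots of `g`. -/
lemma g_unique (φW T : ℝ) (hT0 : 0 < T) (hs : 0 < Real.sin φW) (hc : 0 < Real.cos φW)
    {x y : ℝ} (hx : 0 < x) (hy : 0 < y)
    (hgx : Real.sin φW * Real.cosh (x * T) - x * Real.cos φW * Real.sinh (x * T) = 0)
    (hgy : Real.sin φW * Real.cosh (y * T) - y * Real.cos φW * Real.sinh (y * T) = 0) :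
    x = y := by
  have core : ∀ u v : ℝ, 0 < u → u < v →
      Real.sin φW * Real.cosh (u * T) - u * Real.cos φW * Real.sinh (u * T) = 0 →
      Real.sin φW * Real.cosh (v * T) - v * Real.cos φW * Real.sinh (v * T) = 0 → False := by
    intro u v hu huv hgu hgv
    have hSu : 0 < Real.sinh (u * T) := Real.sinh_pos_iff.2 (mul_pos hu hT0)
    have hSv : 0 < Real.sinh (v * T) := Real.sinh_pos_iff.2 (mul_pos (hu.trans huv) hT0)
    have key : Real.sinh (v * T - u * T)
        = Real.sinh (v * T) * Real.cosh (u * T) - Real.cosh (v * T) * Real.sinh (u * T) :=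
      Real.sinh_sub _ _
    have hpos : 0 < Real.sinh (v * T - u * T) :=
      Real.sinh_pos_iff.2 (by nlinarith)
    have e3 : Real.sin φW * Real.sinh (v * T - u * T)
        = (u - v) * Real.cos φW * Real.sinh (u * T) * Real.sinh (v * T) := by
      rw [key]
      linear_combination Real.sinh (v * T) * hgu - Real.sinh (u * T) * hgv
    have h1 : 0 < Real.sin φW * Real.sinh (v * T - u * T) := mul_pos hs hpos
    rw [e3] at h1
    nlinarith [mul_pos (mul_pos hc hSu) hSv]
  rcases lt_trichotomy x y with h | h | h
  · exact absurd (core x y hx h hgx hgy) (fun h => h)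
  · exact h
  · exact absurd (core y x hy h hgy hgx) (fun h => h)

theorem F2_one_root_on_D3 (φW T : ℝ) (hT0 : 0 < T) (hT : T ≤ Real.pi / 2)
    (hφ1 : 0 < φW) (hφ2 : φW < Real.pi / 2) (hne : φW + T ≠ Real.pi / 2) :
    ∃ a : ℝ, 0 < a ∧ F2 φW T a = 0 ∧
      (∀ b : ℝ, 0 < b → F2 φW T b = 0 → b = a) ∧
      a * Real.cot φW = Real.coth (T * a) ∧
      (∀ b : ℝ, 0 < b → b * Real.cot φW = Real.coth (T * b) → b = a) := by
  have hs : 0 < Real.sin φW :=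
    Real.sin_pos_of_pos_of_lt_pi hφ1 (hφ2.trans (by have := Real.pi_pos; linarith))
  have hc : 0 < Real.cos φW := Real.cos_pos_of_mem_Ioo ⟨by linarith [Real.pi_pos], hφ2⟩
  set g : ℝ → ℝ := fun a => Real.sin φW * Real.cosh (a * T) - a * Real.cos φW * Real.sinh (a * T)
    with hg
  have hgcont : Continuous g := by unfold g; fun_prop
  -- choose a large point where g is negative
  set A : ℝ := max (2 / T) (2 * Real.sin φW / Real.cos φW + 1) with hA
  have hA1 : 2 / T ≤ A := le_max_left _ _
  have hA2 : 2 * Real.sin φW / Real.cos φW + 1 ≤ A := le_max_right _ _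
  have hApos : 0 < A := lt_of_lt_of_le (div_pos two_pos hT0) hA1
  have hAT : 2 ≤ A * T := by
    rw [div_le_iff₀ hT0] at hA1; linarith
  have hSA : 2 < Real.sinh (A * T) := lt_of_le_of_lt hAT (Real.self_lt_sinh_iff.2 (by linarith))
  have hCS : Real.cosh (A * T) ≤ Real.sinh (A * T) + 1 := by
    have h := Real.cosh_sub_sinh (A * T)
    have : Real.exp (-(A * T)) ≤ 1 := Real.exp_le_one_iff.2 (by linarith)
    linarith
  have hAc : 2 * Real.sin φW + Real.cos φW ≤ A * Real.cos φW := by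
    rw [div_add' _ _ _ hc.ne', div_le_iff₀ hc] at hA2
    linarith [hA2]
  have hgA : g A < 0 := by
    have hSA' : 0 < Real.sinh (A * T) := by linarith
    show Real.sin φW * Real.cosh (A * T) - A * Real.cos φW * Real.sinh (A * T) < 0
    nlinarith [mul_pos hs hSA', mul_pos hc hSA', mul_le_mul_of_nonneg_right hAc hSA'.le,
      mul_le_mul_of_nonneg_left hCS hs.le, mul_lt_mul_of_pos_left hSA hs]
  have hg0 : g 0 = Real.sin φW := by simp [hg]
  -- intermediate value theorem
  have hsub : Set.Icc (g A) (g 0) ⊆ g '' Set.Icc 0 A :=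
    intermediate_value_Icc' hApos.le hgcont.continuousOn
  obtain ⟨a, haI, hga⟩ := hsub ⟨hgA.le, by rw [hg0]; exact hs.le⟩
  have ha0 : 0 < a := by
    rcases lt_or_eq_of_le haI.1 with h | h
    · exact h
    · exfalso; rw [← h] at hga; rw [hg0] at hga; linarith
  -- positive second factor
  have hfac2 : ∀ b : ℝ, 0 < b →
      0 < b * Real.sin φW * Real.cosh (b * T) + Real.cos φW * Real.sinh (b * T) := by
    intro b hb
    have := Real.sinh_pos_iff.2 (mul_pos hb hT0)
    have := Real.cosh_pos (b * T)
    positivity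
  have hF2iff : ∀ b : ℝ, 0 < b → (F2 φW T b = 0 ↔ g b = 0) := by
    intro b hb
    rw [F2_factor]
    constructor
    · intro h
      rcases mul_eq_zero.1 h with h | h
      · rcases mul_eq_zero.1 h with h | h
        · norm_num at h
        · exact h
      · exact absurd h (hfac2 b hb).ne'
    · intro h; rw [hg] at h; simp only at h; rw [h]; ring
  refine ⟨a, ha0, (hF2iff a ha0).2 hga, ?_, (g_eq_zero_iff φW T a hT0 hs ha0).1 hga, ?_⟩
  · intro b hb hFb
    exact g_unique φW T hT0 hs hc hb ha0 ((hF2iff b hb).1 hFb) hga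
  · intro b hb hcb
    exact g_unique φW T hT0 hs hc hb ha0 ((g_eq_zero_iff φW T b hT0 hs hb).2 hcb) hga
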